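/- arXiv:1805.06133 — 12 statements merged into one kernel-verified Lean document; each statement's English description precedes it below -/
import Mathlib

section
/- Let R be a ring with identity and a, b, c ∈ R satisfy a(ba)² = abaca = acaba = (ac)²a. If ac is nilpotent, then ba is nilpotent. -/
theorem mul_mul_pow_add_two_eq {M : Type*} [Monoid M] {a b c : M}
    (h1 : a * (b*a)^2 = a*b*a*c*a) (h3 : a*c*a*b*a = (a*c)^2 * a) (k : ℕ) :
    a * (b*a)^(k+2) = a * b * (a*c)^(k+1) * a := by
  induction k with
  | zero => simpa only [zero_add, pow_one, mul_assoc] using h1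
  | succ k ih =>
    calc a * (b*a)^(k+3) = a * (b*a)^(k+2) * (b*a) := by rw [pow_succ _ (k+2), mul_assoc]
      _ = a * b * (a*c)^k * (a*c*a*b*a) := by rw [ih]; simp only [pow_succ, mul_assoc]
      _ = a * b * (a*c)^(k+2) * a := by rw [h3]; simp only [pow_succ, pow_zero, one_mul, mul_assoc]

theorem stmt_0_general {R : Type*} [Ring R] (a b c : R)
    (h1 : a * (b*a)^2 = a*b*a*c*a)
    (h3 : a*c*a*b*a = (a*c)^2 * a)
    (hnil : IsNilpotent (a*c)) : IsNilpotent (b*a) := by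
  obtain ⟨n, hn⟩ := hnil
  refine ⟨n + 3, ?_⟩
  calc (b*a)^(n+3) = b * (a * (b*a)^(n+2)) := by rw [pow_succ', mul_assoc]
    _ = b * (a * b * ((a*c)^n * (a*c)) * a) := by rw [mul_mul_pow_add_two_eq h1 h3, pow_succ]
    _ = 0 := by rw [hn, zero_mul, mul_zero, zero_mul, mul_zero]

theorem stmt_0 {R : Type*} [Ring R] (a b c : R)
    (h1 : a * (b*a)^2 = a*b*a*c*a) (h2 : a*b*a*c*a = a*c*a*b*a)
    (h3 : a*c*a*b*a = (a*c)^2 * a)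
    (hnil : IsNilpotent (a*c)) : IsNilpotent (b*a) :=
  stmt_0_general a b c h1 h3 hnil
end

section
/- Let R be a ring with identity and a, b, c ∈ R satisfy a(ba)² = abaca = acaba = (ac)²a. Then 1 - ac is a unit in R if and only if 1 - ba is a unit in R. Moreover, if s = (1-ac)⁻¹, then (1-ba)⁻¹ = (1 + bsa)(1 + ba) - bsa. -/
/-!
Writing the hypotheses as `ab·aba = ac·aba` and `ab·aca = ac·aca`, they are symmetric in `b` and
`c`. If `s` inverts `1 - ac`, then `t = 1 + ba + bs·aba` inverts `1 - ba`: on the left because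
`aba - ab·aba = (1 - ac)·aba`, on the right because `a(b - c)sa = a(b - c)a`, which follows from
`sa = a + ac·sa` and `a(b - c)aca = 0`. The converse direction is the same statement with `b` and
`c` exchanged, combined with Jacobson's lemma `1 - xy` unit iff `1 - yx` unit.
-/

theorem isUnit_one_sub_mul_comm {R : Type*} [Ring R] (x y : R) :
    IsUnit (1 - x * y) ↔ IsUnit (1 - y * x) := by
  simpa [spectrum.mem_iff] using
    (spectrum.unit_mem_mul_comm (R := ℤ) (a := x) (b := y) (r := 1)).not

section

variable {R : Type*} [Ring R] {a b c s : R}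

theorem mul_mul_mul_sub_mul_mul_mul_eq (hc : a * b * (a * c * a) = a * c * (a * c * a))
    (hs : (1 - a * c) * s = 1) :
    a * b * s * a - a * c * s * a = a * b * a - a * c * a := by
  have hsa : s * a = a + a * c * (s * a) := by
    calc s * a = (1 - a * c) * s * a + a * c * (s * a) := by noncomm_ring
      _ = a + a * c * (s * a) := by rw [hs, one_mul]
  calc a * b * s * a - a * c * s * a = (a * b - a * c) * (s * a) := by noncomm_ring
    _ = (a * b - a * c) * (a + a * c * (a + a * c * (s * a))) := by rw [← hsa, ← hsa]
    _ = a * b * a - a * c * a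
          + (a * b * (a * c * a) - a * c * (a * c * a)) * (1 + c * (s * a)) := by noncomm_ring
    _ = a * b * a - a * c * a := by rw [hc, sub_self, zero_mul, add_zero]

theorem mul_one_sub_mul_eq_one (hb : a * b * (a * b * a) = a * c * (a * b * a))
    (hs : s * (1 - a * c) = 1) :
    (1 + b * a + b * s * (a * b * a)) * (1 - b * a) = 1 := by
  calc (1 + b * a + b * s * (a * b * a)) * (1 - b * a)
      = 1 - b * (a * b * a) + b * s * (a * b * a - a * b * (a * b * a)) := by noncomm_ring
    _ = 1 - b * (a * b * a) + b * (s * (1 - a * c)) * (a * b * a) := by rw [hb]; noncomm_ring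
    _ = 1 := by rw [hs]; noncomm_ring

theorem one_sub_mul_mul_eq_one (hb : a * b * (a * b * a) = a * c * (a * b * a))
    (hc : a * b * (a * c * a) = a * c * (a * c * a)) (hs : (1 - a * c) * s = 1) :
    (1 - b * a) * (1 + b * a + b * s * (a * b * a)) = 1 := by
  have habsa := eq_add_of_sub_eq' (mul_mul_mul_sub_mul_mul_mul_eq hc hs)
  calc (1 - b * a) * (1 + b * a + b * s * (a * b * a))
      = 1 + b * (s * (a * b * a) - a * b * a - (a * b * s * a) * (b * a)) := by noncomm_ring
    _ = 1 + b * (s * (a * b * a) - a * b * a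
          - (a * c * s * a + (a * b * a - a * c * a)) * (b * a)) := by rw [habsa]
    _ = 1 + b * ((1 - a * c) * s * (a * b * a) - a * b * a
          - (a * b * (a * b * a) - a * c * (a * b * a))) := by noncomm_ring
    _ = 1 := by rw [hb, hs]; noncomm_ring

theorem isUnit_one_sub_mul_of_isUnit_one_sub_mul (hb : a * b * (a * b * a) = a * c * (a * b * a))
    (hc : a * b * (a * c * a) = a * c * (a * c * a)) (h : IsUnit (1 - a * c)) :
    IsUnit (1 - b * a) :=
  isUnit_iff_exists.2 ⟨_, one_sub_mul_mul_eq_one hb hc h.mul_val_inv,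
    mul_one_sub_mul_eq_one hb h.val_inv_mul⟩

end

theorem stmt_1 {R : Type*} [Ring R] (a b c : R)
    (h1 : a * (b*a)^2 = a*b*a*c*a) (h2 : a*b*a*c*a = a*c*a*b*a)
    (h3 : a*c*a*b*a = (a*c)^2 * a) :
    (IsUnit (1 - a*c) ↔ IsUnit (1 - b*a)) ∧
    (∀ s : R, s * (1 - a*c) = 1 → (1 - a*c) * s = 1 →
      ((1 + b*s*a) * (1 + b*a) - b*s*a) * (1 - b*a) = 1 ∧
      (1 - b*a) * ((1 + b*s*a) * (1 + b*a) - b*s*a) = 1) := by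
  have hb : a * b * (a * b * a) = a * c * (a * b * a) := by
    simpa only [pow_two, mul_assoc] using h1.trans h2
  have hc : a * b * (a * c * a) = a * c * (a * c * a) := by
    simpa only [pow_two, mul_assoc] using h2.trans h3
  refine ⟨⟨isUnit_one_sub_mul_of_isUnit_one_sub_mul hb hc, fun h => ?_⟩,
    fun s hs₁ hs₂ => ?_⟩
  · rw [isUnit_one_sub_mul_comm] at h ⊢
    exact isUnit_one_sub_mul_of_isUnit_one_sub_mul hc.symm hb.symm h
  · have ht : (1 + b*s*a) * (1 + b*a) - b*s*a = 1 + b * a + b * s * (a * b * a) := by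
      noncomm_ring
    rw [ht]
    exact ⟨mul_one_sub_mul_eq_one hb hs₁, one_sub_mul_mul_eq_one hb hc hs₂⟩
end

section
/- Let R be a ring with identity and a, b, c ∈ R satisfy a(ba)² = abaca = acaba = (ac)²a. If (ac)ⁿ = 0 for some n ∈ ℕ, then (ba)^(n+2) = 0. -/
/-!
With `p = a * (b * a)`, the identity `a (ba)² = (ac)(aba)` says `p * (ba) = (ac) * p`,
so `p (ba)ⁿ = (ac)ⁿ p = 0`, and `(ba)ⁿ⁺² = b * p * (ba)ⁿ`.
-/

theorem SemiconjBy.mul_pow_eq_zero {M : Type*} [MonoidWithZero M] {p x y : M}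
    (h : SemiconjBy p x y) {n : ℕ} (hy : y ^ n = 0) : p * x ^ n = 0 := by
  rw [(h.pow_right n).eq, hy, zero_mul]

theorem semiconjBy_aba_of_eq {R : Type*} [Ring R] {a b c : R}
    (h1 : a * (b*a)^2 = a*b*a*c*a) (h2 : a*b*a*c*a = a*c*a*b*a) :
    SemiconjBy (a * (b*a)) (b*a) (a*c) :=
  calc a * (b*a) * (b*a) = a * (b*a)^2 := by noncomm_ring
    _ = a*c*a*b*a := h1.trans h2
    _ = a*c * (a * (b*a)) := by noncomm_ring

theorem stmt_2_general {R : Type*} [Ring R] (a b c : R)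
    (h1 : a * (b*a)^2 = a*b*a*c*a) (h2 : a*b*a*c*a = a*c*a*b*a)
    (n : ℕ) (hn : (a*c)^n = 0) : (b*a)^(n+2) = 0 :=
  calc (b*a)^(n+2) = b * (a * (b*a) * (b*a)^n) := by simp only [pow_succ', mul_assoc]
    _ = 0 := by rw [(semiconjBy_aba_of_eq h1 h2).mul_pow_eq_zero hn, mul_zero]

theorem stmt_2 {R : Type*} [Ring R] (a b c : R)
    (h1 : a * (b*a)^2 = a*b*a*c*a) (h2 : a*b*a*c*a = a*c*a*b*a)
    (h3 : a*c*a*b*a = (a*c)^2 * a)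
    (n : ℕ) (hn : (a*c)^n = 0) : (b*a)^(n+2) = 0 :=
  stmt_2_general a b c h1 h2 n hn
end

section
/- Let R be a ring with identity and a, b, c ∈ R satisfy a(ba)² = abaca = acaba = (ac)²a. Set p = 1 - (ac)d for any element d ∈ R commuting with ac satisfying d(ac)d = d (e.g. a g-Drazin inverse of ac). Then (pa)b(pa)b(pa) = (pa)b(pa)c(pa). -/
/-!
Since `p a = a (1 - c d a)`, the element `(pa)b(pa)x(pa)` equals `p (a b p a x a) (1 - c d a)`, so it
suffices to show `a b p·aba = a b p·aca`. Expanding `p = 1 - acd`, this splits into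
`ab·aba = ab·aca` and `acd·aba = acd·aca`; the latter follows from `ac·aba = ac·aca` because `d`
commutes with `ac`.
-/

theorem SemiconjBy.sandwich_congr {S : Type*} [Semigroup S] {a b p q x y : S}
    (hq : SemiconjBy a q p) (h : a * b * p * a * x * a = a * b * p * a * y * a) :
    (p * a) * b * (p * a) * x * (p * a) = (p * a) * b * (p * a) * y * (p * a) :=
  calc (p * a) * b * (p * a) * x * (p * a) = (p * a) * b * (p * a) * x * (a * q) := by rw [hq.eq]
    _ = p * (a * b * p * a * x * a) * q := by simp only [mul_assoc]
    _ = p * (a * b * p * a * y * a) * q := by rw [h]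
    _ = (p * a) * b * (p * a) * y * (a * q) := by simp only [mul_assoc]
    _ = (p * a) * b * (p * a) * y * (p * a) := by rw [hq.eq]

theorem stmt_4_general {R : Type*} [Ring R] (a b c d : R)
    (h1 : a * (b*a)^2 = a*b*a*c*a)
    (h3 : a*c*a*b*a = (a*c)^2 * a)
    (hd1 : d * (a*c) = (a*c) * d) :
    let p := 1 - a*c*d
    (p*a) * b * (p*a) * b * (p*a) = (p*a) * b * (p*a) * c * (p*a) := by
  intro p
  have hb : a*b*a*b*a = a*b*a*c*a := (by noncomm_ring : a*b*a*b*a = a * (b*a)^2).trans h1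
  have hc : a*c*(a*b*a) = a*c*(a*c*a) := by rw [← mul_assoc, ← mul_assoc, h3]; noncomm_ring
  have hd : a*c*d*(a*b*a) = a*c*d*(a*c*a) := by rw [← hd1, mul_assoc, hc, ← mul_assoc]
  have hp : SemiconjBy a (1 - c*d*a) p := by
    show a * (1 - c*d*a) = (1 - a*c*d) * a
    noncomm_ring
  refine hp.sandwich_congr ?_
  show a*b*(1 - a*c*d)*a*b*a = a*b*(1 - a*c*d)*a*c*a
  linear_combination (norm := noncomm_ring) hb - a*b*hd

theorem stmt_4 {R : Type*} [Ring R] (a b c d : R)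
    (h1 : a * (b*a)^2 = a*b*a*c*a) (h2 : a*b*a*c*a = a*c*a*b*a)
    (h3 : a*c*a*b*a = (a*c)^2 * a)
    (hd1 : d * (a*c) = (a*c) * d) (hd2 : d * (a*c) * d = d) :
    let p := 1 - a*c*d
    (p*a) * b * (p*a) * b * (p*a) = (p*a) * b * (p*a) * c * (p*a) :=
  stmt_4_general a b c d h1 h3 hd1
end

section
/- Let R be a ring with identity and a, b, c ∈ R satisfy a(ba)² = abaca = acaba = (ac)²a. If d is a Drazin inverse of ac (i.e. d(ac) = (ac)d, d(ac)d = d, and ac - (ac)²d is nilpotent), then e := bd²a is a Drazin inverse of ba: e(ba) = (ba)e, e(ba)e = e, and ba - (ba)²e is nilpotent. -/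
/-!
Write `p = a * c` and `D = a * b - p`. The hypotheses amount to the vanishing of `D * p * a`,
`p * D * a` and `D * D * a`. Since `d = p ^ 2 * d ^ 3 = d ^ 3 * p ^ 2`, this forces `D * d = 0`
and `d * D * a = 0`: next to `d`, the factor `a * b` may be replaced by `p`, and the identities
for `e = b * d ^ 2 * a` reduce to those for `d`. For nilpotency,
`b * a - (b * a) ^ 2 * e = b * q * a` with `q = 1 - p * d`, and `x = a * b * q = N + D` with
`N = p - p ^ 2 * d` nilpotent. The vanishing products give `x ^ 2 * a = N ^ 2 * a`, hence
`x ^ 3 = N ^ 2 * x`, so `x` is nilpotent, and so is `b * q * a` by the nilpotent case of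
Cline's formula.
-/

theorem isNilpotent_mul_comm {M : Type*} [MonoidWithZero M] {x y : M} :
    IsNilpotent (x * y) ↔ IsNilpotent (y * x) := by
  have key : ∀ x y : M, IsNilpotent (x * y) → IsNilpotent (y * x) := by
    rintro x y ⟨n, hn⟩
    exact ⟨n + 1, by rw [pow_succ, ← mul_assoc, mul_pow_mul, hn, mul_zero, zero_mul]⟩
  exact ⟨key x y, key y x⟩

theorem IsNilpotent.of_pow_succ_eq_mul {M : Type*} [MonoidWithZero M] {x n : M} {m : ℕ}
    (hn : IsNilpotent n) (h : x ^ (m + 1) = n * x) : IsNilpotent x := by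
  have hpow : ∀ j : ℕ, x ^ (j * m + 1) = n ^ j * x := by
    intro j
    induction j with
    | zero => simp
    | succ j ih =>
      rw [show (j + 1) * m + 1 = m + 1 + j * m by ring, pow_add, h, mul_assoc, ← pow_succ', ih,
        ← mul_assoc, ← pow_succ']
  obtain ⟨k, hk⟩ := hn
  exact ⟨k * m + 1, by rw [hpow, hk, zero_mul]⟩

section

variable {R : Type*} [Ring R]

structure IsDrazinInverse (x y : R) : Prop where
  commute : Commute y x
  mul_mul_self : y * x * y = y
  isNilpotent_sub : IsNilpotent (x - x ^ 2 * y)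

namespace IsDrazinInverse

variable {x y z : R}

theorem mul_sq (h : IsDrazinInverse x y) : x * y ^ 2 = y := by
  rw [sq, ← mul_assoc, ← h.commute.eq, h.mul_mul_self]

theorem sq_mul (h : IsDrazinInverse x y) : y ^ 2 * x = y := by
  rw [(h.commute.pow_left 2).eq, h.mul_sq]

theorem sq_mul_pow_three (h : IsDrazinInverse x y) : x ^ 2 * y ^ 3 = y := by
  rw [show x ^ 2 * y ^ 3 = x * (x * y ^ 2) * y by noncomm_ring, h.mul_sq, mul_assoc, ← sq,
    h.mul_sq]

theorem pow_three_mul_sq (h : IsDrazinInverse x y) : y ^ 3 * x ^ 2 = y := by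
  rw [(h.commute.pow_pow 3 2).eq, h.sq_mul_pow_three]

theorem mul_eq_zero_of_mul_sq_eq_zero (h : IsDrazinInverse x y) (hz : z * x ^ 2 = 0) :
    z * y = 0 := by
  rw [← h.sq_mul_pow_three, ← mul_assoc, hz, zero_mul]

theorem mul_eq_zero_of_sq_mul_eq_zero (h : IsDrazinInverse x y) (hz : x ^ 2 * z = 0) :
    y * z = 0 := by
  rw [← h.pow_three_mul_sq, mul_assoc, hz, mul_zero]

variable {a b c d D : R}

theorem mul_sq_mul_mul_eq (hd : IsDrazinInverse (a * c) d) (hab : a * b = a * c + D)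
    (hdD : d * (D * a) = 0) : b * d ^ 2 * a * (b * a) = b * d * a := calc
  b * d ^ 2 * a * (b * a) = b * (d ^ 2 * (a * c)) * a + b * d * (d * (D * a)) := by
    rw [show b * d ^ 2 * a * (b * a) = b * d ^ 2 * (a * b) * a by noncomm_ring, hab]; noncomm_ring
  _ = b * d * a := by rw [hd.sq_mul, hdD, mul_zero, add_zero]

theorem mul_mul_mul_sq_mul_eq (hd : IsDrazinInverse (a * c) d) (hab : a * b = a * c + D)
    (hDd : D * d = 0) : b * a * (b * d ^ 2 * a) = b * d * a := calc
  b * a * (b * d ^ 2 * a) = b * (a * c * d ^ 2) * a + b * (D * d) * d * a := by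
    rw [show b * a * (b * d ^ 2 * a) = b * (a * b) * d ^ 2 * a by noncomm_ring, hab]; noncomm_ring
  _ = b * d * a := by rw [hd.mul_sq, hDd, mul_zero, zero_mul, zero_mul, add_zero]

theorem mul_sq_mul_mul_mul_sq_mul (hd : IsDrazinInverse (a * c) d) (hab : a * b = a * c + D)
    (hDd : D * d = 0) (hdD : d * (D * a) = 0) :
    b * d ^ 2 * a * (b * a) * (b * d ^ 2 * a) = b * d ^ 2 * a := calc
  _ = b * d * a * (b * d ^ 2 * a) := by rw [hd.mul_sq_mul_mul_eq hab hdD]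
  _ = b * (d * (a * c) * d) * d * a + b * d * (D * d) * d * a := by
    rw [show b * d * a * (b * d ^ 2 * a) = b * d * (a * b) * d ^ 2 * a by noncomm_ring, hab]
    noncomm_ring
  _ = b * d ^ 2 * a := by rw [hd.mul_mul_self, hDd]; noncomm_ring

theorem sub_sq_mul_mul_sq_mul (hd : IsDrazinInverse (a * c) d) (hab : a * b = a * c + D)
    (hDd : D * d = 0) :
    b * a - (b * a) ^ 2 * (b * d ^ 2 * a) = b * (1 - a * c * d) * a := calc
  _ = b * a - b * a * (b * d * a) := by rw [sq, mul_assoc, hd.mul_mul_mul_sq_mul_eq hab hDd]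
  _ = b * (1 - a * c * d) * a - b * (D * d) * a := by
    rw [show b * a * (b * d * a) = b * (a * b) * d * a by noncomm_ring, hab]; noncomm_ring
  _ = b * (1 - a * c * d) * a := by rw [hDd, mul_zero, zero_mul, sub_zero]

theorem isNilpotent_mul_mul_one_sub (hd : IsDrazinInverse (a * c) d) (hab : a * b = a * c + D)
    (hDd : D * d = 0) (hdD : d * (D * a) = 0) (hDp : D * (a * c) * a = 0)
    (hpD : a * c * D * a = 0) (hDD : D * D * a = 0) :
    IsNilpotent (a * (b * (1 - a * c * d))) := by
  set N := a * c - (a * c) ^ 2 * d with hN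
  have hx : a * (b * (1 - a * c * d)) = N + D := calc
    _ = N + D - D * (d * (a * c)) := by rw [← mul_assoc, hab, hd.commute.eq, hN]; noncomm_ring
    _ = N + D := by rw [← mul_assoc, hDd, zero_mul, sub_zero]
  -- the three bracketed terms are `N * D * a`, `D * N * a` and `D * D * a`
  have hx2 : (a * (b * (1 - a * c * d))) ^ 2 * a = N ^ 2 * a := calc
    _ = N ^ 2 * a + (a * c * D * a - (a * c) ^ 2 * (d * (D * a)))
        + (D * (a * c) * a - D * (a * c) * a * c * d * a) + D * D * a := by
      rw [hx, hN]; noncomm_ring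
    _ = N ^ 2 * a := by rw [hpD, hdD, hDp, hDD]; noncomm_ring
  have hx3 : (a * (b * (1 - a * c * d))) ^ (2 + 1) = N ^ 2 * (a * (b * (1 - a * c * d))) := by
    rw [pow_succ, ← mul_assoc, hx2, mul_assoc]
  exact (hd.isNilpotent_sub.pow_succ 1).of_pow_succ_eq_mul hx3

theorem mul_sq_mul (hd : IsDrazinInverse (a * c) d)
    (h1 : a * b * a * b * a = a * b * a * c * a) (h2 : a * b * a * c * a = a * c * a * b * a)
    (h3 : a * c * a * b * a = (a * c) ^ 2 * a) : IsDrazinInverse (b * a) (b * d ^ 2 * a) := by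
  have hab : a * b = a * c + (a * b - a * c) := by abel
  have hDp : (a * b - a * c) * (a * c) * a = 0 := by
    rw [← sub_eq_zero.mpr (h2.trans h3)]; noncomm_ring
  have hpD : a * c * (a * b - a * c) * a = 0 := by
    rw [← sub_eq_zero.mpr h3]; noncomm_ring
  have hDD : (a * b - a * c) * (a * b - a * c) * a = 0 := calc
    _ = (a * b * a * b * a - a * b * a * c * a) - (a * c * a * b * a - (a * c) ^ 2 * a) := by
      noncomm_ring
    _ = 0 := by rw [h1, h3, sub_self, sub_self, sub_zero]
  have hDd : (a * b - a * c) * d = 0 :=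
    hd.mul_eq_zero_of_mul_sq_eq_zero (by rw [sq, ← mul_assoc, ← mul_assoc, hDp, zero_mul])
  have hdD : d * ((a * b - a * c) * a) = 0 :=
    hd.mul_eq_zero_of_sq_mul_eq_zero <| by
      rw [sq, mul_assoc, ← mul_assoc (a * c) _ a, hpD, mul_zero]
  refine ⟨(hd.mul_sq_mul_mul_eq hab hdD).trans (hd.mul_mul_mul_sq_mul_eq hab hDd).symm,
    hd.mul_sq_mul_mul_mul_sq_mul hab hDd hdD, ?_⟩
  rw [hd.sub_sq_mul_mul_sq_mul hab hDd]
  exact isNilpotent_mul_comm.mp (hd.isNilpotent_mul_mul_one_sub hab hDd hdD hDp hpD hDD)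

end IsDrazinInverse

end

theorem stmt_5 {R : Type*} [Ring R] (a b c d : R)
    (h1 : a * (b*a)^2 = a*b*a*c*a) (h2 : a*b*a*c*a = a*c*a*b*a)
    (h3 : a*c*a*b*a = (a*c)^2 * a)
    (hd1 : d * (a*c) = (a*c) * d) (hd2 : d * (a*c) * d = d)
    (hd3 : IsNilpotent (a*c - (a*c)^2 * d)) :
    let e := b*d^2*a
    e * (b*a) = (b*a) * e ∧ e * (b*a) * e = e ∧
      IsNilpotent (b*a - (b*a)^2 * e) := by
  have h := IsDrazinInverse.mul_sq_mul ⟨hd1, hd2, hd3⟩ (by rw [← h1]; noncomm_ring) h2 h3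
  exact ⟨h.commute, h.mul_mul_self, h.isNilpotent_sub⟩
end

section
/- Let R be a ring with identity and a, b, c ∈ R satisfy a(ba)² = abaca = acaba = (ac)²a. Then ac has a Drazin inverse if and only if ba has a Drazin inverse; in that case (ba)^D = b((ac)^D)²a and (ac)^D = a((ba)^D)²c. -/
/-!
Write `p = ac` and `q = ba`. The hypotheses give `a q² = p² a` and `p a q = p² a`, so
`a q^(k+2) = p^(k+2) a` for all `k`: multiplication by `a` intertwines high powers of `q` and `p`.
Together with `pᵏ (pᴰ)^(k+m+1) = (pᴰ)^(m+1)` this lets one verify directly that `b (pᴰ)² a`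
satisfies the Drazin conditions for `q`, nilpotency being replaced by the index condition
`x^(n+1) xᴰ = xⁿ`. The hypotheses are invariant under passing to `Rᵐᵒᵖ` and exchanging `b`
and `c`, which gives the converse; the formulas then follow from uniqueness of Drazin inverses.
-/

def IsDrazinInv {R : Type*} [Ring R] (x y : R) : Prop :=
  x * y = y * x ∧ y * x * y = y ∧ IsNilpotent (x - x^2 * y)

open MulOpposite

section Drazin

variable {R : Type*} [Ring R] {x y z : R}

theorem sub_sq_mul_pow_succ (hc : Commute x y) (hy : y * x * y = y) (n : ℕ) :
    (x - x ^ 2 * y) ^ (n + 1) = x ^ (n + 1) - x ^ (n + 2) * y := by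
  have hidem : IsIdempotentElem (1 - x * y) := by
    refine IsIdempotentElem.one_sub ?_
    change x * y * (x * y) = x * y
    rw [mul_assoc, ← mul_assoc y, hy]
  have hcomm : Commute x (1 - x * y) :=
    (Commute.one_right x).sub_right ((Commute.refl x).mul_right hc)
  calc (x - x ^ 2 * y) ^ (n + 1) = (x * (1 - x * y)) ^ (n + 1) := by noncomm_ring
    _ = x ^ (n + 1) * (1 - x * y) := by rw [hcomm.mul_pow, hidem.pow_succ_eq]
    _ = x ^ (n + 1) - x ^ (n + 2) * y := by rw [mul_sub, mul_one, ← mul_assoc, ← pow_succ]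

theorem isDrazinInv_iff_exists_pow_succ_mul :
    IsDrazinInv x y ↔ Commute x y ∧ y * x * y = y ∧ ∃ n, x ^ (n + 1) * y = x ^ n := by
  refine and_congr_right fun hc => and_congr_right fun hy => ⟨?_, ?_⟩
  · rintro ⟨n, hn⟩
    refine ⟨n + 1, (sub_eq_zero.1 ?_).symm⟩
    rw [← sub_sq_mul_pow_succ hc hy, pow_succ, hn, zero_mul]
  · rintro ⟨n, hn⟩
    refine ⟨n + 1, ?_⟩
    rw [sub_sq_mul_pow_succ hc hy, pow_succ' x (n + 1), mul_assoc, hn, ← pow_succ', sub_self]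

theorem isDrazinInv_op_iff : IsDrazinInv (op x) (op y) ↔ IsDrazinInv x y := by
  simp only [isDrazinInv_iff_exists_pow_succ_mul, commute_op, ← op_mul, ← op_pow, op_inj,
    mul_assoc]
  exact and_congr_right fun hc => and_congr_right fun _ => by simp only [(hc.pow_left _).eq]

namespace IsDrazinInv

theorem commute (h : IsDrazinInv x y) : Commute x y := h.1

theorem mul_pow_succ_succ (h : IsDrazinInv x y) (m : ℕ) : x * y ^ (m + 2) = y ^ (m + 1) := by
  rw [pow_succ' y (m + 1), pow_succ' y m, ← mul_assoc, ← mul_assoc, h.1, h.2.1]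

theorem pow_mul_pow_add_succ (h : IsDrazinInv x y) (k m : ℕ) :
    x ^ k * y ^ (k + m + 1) = y ^ (m + 1) := by
  induction k with
  | zero => simp
  | succ k ih => rw [pow_succ, mul_assoc, show k + 1 + m + 1 = k + m + 2 by omega,
      h.mul_pow_succ_succ, ← ih]

theorem unique (hy : IsDrazinInv x y) (hz : IsDrazinInv x z) : y = z := by
  obtain ⟨-, -, n, hn⟩ := isDrazinInv_iff_exists_pow_succ_mul.1 hz
  obtain ⟨-, -, m, hm⟩ := isDrazinInv_iff_exists_pow_succ_mul.1 hy
  have hyx : IsIdempotentElem (y * x) := by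
    change y * x * (y * x) = y * x
    rw [← mul_assoc, hy.2.1]
  have hxz : IsIdempotentElem (x * z) := by
    change x * z * (x * z) = x * z
    rw [mul_assoc, ← mul_assoc z, hz.2.1]
  calc y = y ^ (n + 1) * x ^ n := by
        simpa [(hy.commute.pow_pow n (n + 1)).eq] using (hy.pow_mul_pow_add_succ n 0).symm
    _ = (y * x) ^ (n + 1) * z := by rw [← hn, ← mul_assoc, (hy.commute.symm).mul_pow]
    _ = y * ((x * z) ^ (m + 1)) := by rw [hyx.pow_succ_eq, hxz.pow_succ_eq, mul_assoc]
    _ = x ^ m * z ^ (m + 1) := by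
        rw [hz.commute.mul_pow, ← mul_assoc, ← (hy.commute.pow_left _).eq, hm]
    _ = z := by simpa using hz.pow_mul_pow_add_succ m 0

end IsDrazinInv

end Drazin

theorem mul_pow_add_two_eq_pow_add_two_mul {M : Type*} [Monoid M] {a p q : M}
    (h₂ : a * q ^ 2 = p ^ 2 * a) (h : p * a * q = p ^ 2 * a) (k : ℕ) :
    a * q ^ (k + 2) = p ^ (k + 2) * a := by
  induction k with
  | zero => exact h₂
  | succ k ih =>
    calc a * q ^ (k + 1 + 2) = p ^ (k + 2) * a * q := by rw [pow_succ, ← mul_assoc, ih]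
      _ = p ^ (k + 1) * (p * a * q) := by rw [pow_succ]; simp only [mul_assoc]
      _ = p ^ (k + 1 + 2) * a := by rw [h, ← mul_assoc, ← pow_add]

section Cline

variable {R : Type*} [Ring R] {a b c d e : R}

/-- With `c = b` this is Cline's formula `(ba)ᴰ = b ((ab)ᴰ)² a`. -/
theorem IsDrazinInv.cline (hd : IsDrazinInv (a * c) d)
    (hbb : a * b * a * b * a = a * c * a * c * a) (hbc : a * b * a * c * a = a * c * a * c * a)
    (hcb : a * c * a * b * a = a * c * a * c * a) :
    IsDrazinInv (b * a) (b * d ^ 2 * a) := by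
  have transfer := mul_pow_add_two_eq_pow_add_two_mul (a := a) (p := a * c) (q := b * a)
    (by simpa only [sq, ← mul_assoc] using hbb) (by simpa only [sq, ← mul_assoc] using hcb)
  have hd₁ : (a * c) ^ 3 * d ^ 4 = d := by simpa using hd.pow_mul_pow_add_succ 3 0
  have hd₂ : (a * c) ^ 2 * d ^ 4 = d ^ 2 := hd.pow_mul_pow_add_succ 2 1
  have hab : a * b * d ^ 2 = d := by
    have : a * b * (a * c) ^ 2 = (a * c) ^ 3 := by
      simp only [pow_succ, pow_zero, one_mul, ← mul_assoc, hbc]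
    rw [← hd₂, ← mul_assoc, this, hd₁]
  have haba : d ^ 2 * (a * b * a) = d * a := by
    have : (a * c) ^ 2 * (a * b * a) = (a * c) ^ 3 * a := by
      calc (a * c) ^ 2 * (a * b * a) = a * c * (a * c * a * b * a) := by noncomm_ring
        _ = (a * c) ^ 3 * a := by rw [hcb]; noncomm_ring
    rw [← hd₂, (hd.commute.pow_pow 2 4).eq, mul_assoc, this, ← mul_assoc,
      ← (hd.commute.pow_pow 3 4).eq, hd₁]
  obtain ⟨-, -, n, hn⟩ := isDrazinInv_iff_exists_pow_succ_mul.1 hd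
  refine isDrazinInv_iff_exists_pow_succ_mul.2 ⟨?_, ?_, n + 3, ?_⟩
  · calc b * a * (b * d ^ 2 * a) = b * (a * b * d ^ 2) * a := by noncomm_ring
      _ = b * (d ^ 2 * (a * b * a)) := by rw [hab, haba, mul_assoc]
      _ = b * d ^ 2 * a * (b * a) := by noncomm_ring
  · calc b * d ^ 2 * a * (b * a) * (b * d ^ 2 * a)
          = b * (d ^ 2 * (a * b * a)) * (b * d ^ 2 * a) := by noncomm_ring
      _ = b * d * (a * b * d ^ 2) * a := by rw [haba]; noncomm_ring
      _ = b * d ^ 2 * a := by rw [hab]; noncomm_ring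
  · have hn₂ : (a * c) ^ (n + 3) * d = (a * c) ^ (n + 2) := by
      rw [show n + 3 = 2 + (n + 1) by ring, pow_add, mul_assoc, hn, ← pow_add, add_comm]
    calc (b * a) ^ (n + 3 + 1) * (b * d ^ 2 * a)
          = b * (a * (b * a) ^ (n + 1 + 2)) * b * d ^ 2 * a := by rw [pow_succ']; noncomm_ring
      _ = b * ((a * c) ^ (n + 3) * (a * b * d ^ 2)) * a := by rw [transfer]; noncomm_ring
      _ = b * (a * (b * a) ^ (n + 2)) := by rw [hab, hn₂, transfer, mul_assoc]
      _ = (b * a) ^ (n + 3) := by rw [pow_succ' _ (n + 2)]; noncomm_ring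

/-- `cline` in `Rᵐᵒᵖ` with `b` and `c` exchanged. -/
theorem IsDrazinInv.cline_dual (he : IsDrazinInv (b * a) e)
    (hbb : a * b * a * b * a = a * c * a * c * a) (hbc : a * b * a * c * a = a * c * a * c * a)
    (hcb : a * c * a * b * a = a * c * a * c * a) :
    IsDrazinInv (a * c) (a * e ^ 2 * c) := by
  have hop : IsDrazinInv (op a * op b) (op e) := by rwa [← op_mul, isDrazinInv_op_iff]
  have := hop.cline (b := op c) (by simpa only [← op_mul, mul_assoc] using congrArg op hbb.symm)
    (by simpa only [← op_mul, mul_assoc] using congrArg op (hbc.trans hbb.symm))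
    (by simpa only [← op_mul, mul_assoc] using congrArg op (hcb.trans hbb.symm))
  rwa [← op_pow, ← op_mul, ← op_mul, ← op_mul, isDrazinInv_op_iff, ← mul_assoc] at this

end Cline

theorem stmt_6 {R : Type*} [Ring R] (a b c : R)
    (h1 : a * (b*a)^2 = a*b*a*c*a) (h2 : a*b*a*c*a = a*c*a*b*a)
    (h3 : a*c*a*b*a = (a*c)^2 * a) :
    ((∃ d, IsDrazinInv (a*c) d) ↔ (∃ e, IsDrazinInv (b*a) e)) ∧
    (∀ d e, IsDrazinInv (a*c) d → IsDrazinInv (b*a) e →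
      e = b * d^2 * a ∧ d = a * e^2 * c) := by
  have hcb : a * c * a * b * a = a * c * a * c * a := by rw [h3]; noncomm_ring
  have hbc : a * b * a * c * a = a * c * a * c * a := h2.trans hcb
  have hbb : a * b * a * b * a = a * c * a * c * a := by rw [← hbc, ← h1]; noncomm_ring
  have ac_to_ba {d : R} (hd : IsDrazinInv (a * c) d) := hd.cline hbb hbc hcb
  have ba_to_ac {e : R} (he : IsDrazinInv (b * a) e) := he.cline_dual hbb hbc hcb
  exact ⟨⟨fun ⟨_, hd⟩ => ⟨_, ac_to_ba hd⟩, fun ⟨_, he⟩ => ⟨_, ba_to_ac he⟩⟩,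
    fun _ _ hd he => ⟨he.unique (ac_to_ba hd), hd.unique (ba_to_ac he)⟩⟩
end

section
/- Let R be a ring with identity, k ∈ ℕ with k ≥ 1, and a, b, c ∈ R satisfy a(ba)² = abaca = acaba = (ac)²a. Then (ac)^k has a Drazin inverse if and only if (ba)^k has a Drazin inverse. -/
theorem isIdempotentElem_mul_of_mul_mul_eq {M : Type*} [Semigroup M] {x y : M}
    (hy : y * x * y = y) : IsIdempotentElem (x * y) := by
  rw [IsIdempotentElem, mul_assoc, ← mul_assoc y, hy]

theorem Commute.mul_pow_of_isIdempotentElem {M : Type*} [Monoid M] {x p : M} (hxp : Commute x p)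
    (hp : IsIdempotentElem p) {n : ℕ} (hn : n ≠ 0) : (x * p) ^ n = x ^ n * p := by
  rw [hxp.mul_pow, hp.pow_eq hn]

theorem Commute.isNilpotent_mul_iff_of_isIdempotentElem {M : Type*} [MonoidWithZero M] {x p : M}
    (hxp : Commute x p) (hp : IsIdempotentElem p) :
    IsNilpotent (x * p) ↔ ∃ n, x ^ n * p = 0 := by
  constructor
  · rintro ⟨n, hn⟩
    exact ⟨n + 1, by rw [← hxp.mul_pow_of_isIdempotentElem hp n.succ_ne_zero, pow_succ, hn,
      zero_mul]⟩
  · rintro ⟨n, hn⟩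
    exact ⟨n + 1, by rw [hxp.mul_pow_of_isIdempotentElem hp n.succ_ne_zero, pow_succ, mul_assoc,
      hxp.eq, ← mul_assoc, hn, zero_mul]⟩

section Drazin

variable {R : Type*} [Ring R] {x y : R}

def IsDrazinInvertible (x : R) : Prop := ∃ y, IsDrazinInv x y

theorem isDrazinInv_iff :
    IsDrazinInv x y ↔ Commute x y ∧ y * x * y = y ∧ ∃ n, x ^ n * (1 - x * y) = 0 := by
  refine and_congr_right fun hc => and_congr_right fun hy => ?_
  have hcomm : Commute x (1 - x * y) :=
    (Commute.one_right x).sub_right ((Commute.refl x).mul_right hc)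
  rw [show x - x ^ 2 * y = x * (1 - x * y) by noncomm_ring,
    hcomm.isNilpotent_mul_iff_of_isIdempotentElem (isIdempotentElem_mul_of_mul_mul_eq hy).one_sub]

namespace IsDrazinInv

theorem commute_of_commute (h : IsDrazinInv x y) {u : R} (hu : Commute u x) : Commute u y := by
  obtain ⟨hc, hy, n, hn⟩ := isDrazinInv_iff.mp h
  have hy_pow : ∀ m : ℕ, y ^ (m + 1) * x ^ m = y := by
    intro m
    induction m with
    | zero => simp
    | succ m ih =>
      calc y ^ (m + 1 + 1) * x ^ (m + 1) = y * (y ^ (m + 1) * x ^ m) * x := by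
            rw [pow_succ' y (m + 1), pow_succ x m]; simp only [mul_assoc]
        _ = y := by rw [ih, mul_assoc, ← hc.eq, ← mul_assoc, hy]
  -- `y = y ^ (n + 1) * x ^ n` lets `u` through to `x ^ n`, which `1 - x * y` annihilates.
  have hyu : y * u * (1 - x * y) = 0 := by
    calc y * u * (1 - x * y) = y ^ (n + 1) * x ^ n * u * (1 - x * y) := by rw [hy_pow]
      _ = y ^ (n + 1) * u * (x ^ n * (1 - x * y)) := by
        rw [mul_assoc _ (x ^ n), ← (hu.pow_right n).eq]; simp only [mul_assoc]
      _ = 0 := by rw [hn, mul_zero]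
  have huy : (1 - x * y) * u * y = 0 := by
    have hcomm : Commute (1 - x * y) (x ^ n) :=
      ((Commute.one_left _).sub_left (((Commute.refl x).mul_left hc.symm).pow_right n))
    calc (1 - x * y) * u * y = (1 - x * y) * u * (x ^ n * y ^ (n + 1)) := by
          rw [(hc.pow_pow n (n + 1)).eq, hy_pow]
      _ = (1 - x * y) * (u * x ^ n) * y ^ (n + 1) := by simp only [mul_assoc]
      _ = x ^ n * (1 - x * y) * u * y ^ (n + 1) := by
        rw [(hu.pow_right n).eq, ← mul_assoc, hcomm.eq]
      _ = 0 := by rw [hn, zero_mul, zero_mul]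
  rw [mul_sub, mul_one, sub_eq_zero] at hyu
  rw [sub_mul, sub_mul, one_mul, sub_eq_zero] at huy
  calc u * y = x * y * u * y := huy
    _ = y * (x * u) * y := by rw [← mul_assoc, ← hc.eq]
    _ = y * u * (x * y) := by rw [← hu.eq]; simp only [mul_assoc]
    _ = y * u := hyu.symm

theorem pow (h : IsDrazinInv x y) (k : ℕ) : IsDrazinInv (x ^ k) (y ^ k) := by
  obtain ⟨hc, hy, n, hn⟩ := isDrazinInv_iff.mp h
  refine isDrazinInv_iff.mpr ⟨hc.pow_pow k k, ?_, n, ?_⟩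
  · rw [← hc.symm.mul_pow, ← ((Commute.refl y).mul_left hc).mul_pow, hy]
  · rw [← hc.mul_pow]
    rcases k with _ | k
    · simp
    · rw [(isIdempotentElem_mul_of_mul_mul_eq hy).pow_succ_eq, pow_right_comm, pow_succ,
        mul_assoc, hn, mul_zero]

theorem of_pow {k : ℕ} (hk : k ≠ 0) {z : R} (h : IsDrazinInv (x ^ k) z) :
    IsDrazinInv x (x ^ (k - 1) * z) := by
  obtain ⟨-, hz, n, hn⟩ := isDrazinInv_iff.mp h
  have hxz : Commute x z := h.commute_of_commute ((Commute.refl x).pow_right k)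
  have hxk : x * (x ^ (k - 1) * z) = x ^ k * z := by
    rw [← mul_assoc, ← pow_succ', Nat.sub_add_cancel (Nat.pos_of_ne_zero hk)]
  refine isDrazinInv_iff.mpr ⟨((Commute.refl x).pow_right _).mul_right hxz, ?_, k * n, ?_⟩
  · rw [mul_assoc, hxk, mul_assoc, ← mul_assoc z, hz]
  · rw [hxk, pow_mul]
    exact hn

/-- Cline's formula. -/
theorem mul_swap {d : R} (h : IsDrazinInv (x * y) d) :
    IsDrazinInv (y * x) (y * d ^ 2 * x) := by
  obtain ⟨hc, hd, n, hn⟩ := isDrazinInv_iff.mp h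
  have hl : y * x * (y * d ^ 2 * x) = y * d * x := by
    calc y * x * (y * d ^ 2 * x) = y * (x * y * d) * d * x := by rw [sq]; simp only [mul_assoc]
      _ = y * (d * (x * y) * d) * x := by rw [hc.eq]; simp only [mul_assoc]
      _ = y * d * x := by rw [hd]
  have hr : y * d ^ 2 * x * (y * x) = y * d * x := by
    calc y * d ^ 2 * x * (y * x) = y * (d * (d * (x * y))) * x := by
          rw [sq]; simp only [mul_assoc]
      _ = y * (d * (x * y * d)) * x := by rw [hc.eq]
      _ = y * d * x := by rw [← mul_assoc d, hd]
  have hsemiconj : SemiconjBy x (y * x) (x * y) := (mul_assoc x y x).symm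
  refine isDrazinInv_iff.mpr ⟨hl.trans hr.symm, ?_, n + 1, ?_⟩
  · calc y * d ^ 2 * x * (y * x) * (y * d ^ 2 * x) = y * (d * (x * y) * d) * d * x := by
          rw [hr, sq]; simp only [mul_assoc]
      _ = y * d ^ 2 * x := by rw [hd, sq]; simp only [mul_assoc]
  · rw [hl, pow_succ', mul_assoc y x, hsemiconj.pow_right n]
    calc y * ((x * y) ^ n * x) * (1 - y * d * x) = y * ((x * y) ^ n * (1 - x * y * d)) * x := by
          simp only [mul_sub, sub_mul, mul_one, mul_assoc]
      _ = 0 := by rw [hn, mul_zero, zero_mul]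

end IsDrazinInv

theorem isDrazinInvertible_pow_iff {k : ℕ} (hk : k ≠ 0) :
    IsDrazinInvertible (x ^ k) ↔ IsDrazinInvertible x :=
  ⟨fun ⟨_, h⟩ => ⟨_, h.of_pow hk⟩, fun ⟨_, h⟩ => ⟨_, h.pow k⟩⟩

theorem isDrazinInvertible_mul_comm : IsDrazinInvertible (x * y) ↔ IsDrazinInvertible (y * x) :=
  ⟨fun ⟨_, h⟩ => ⟨_, h.mul_swap⟩, fun ⟨_, h⟩ => ⟨_, h.mul_swap⟩⟩

end Drazin

theorem stmt_7_general {R : Type*} [Ring R] (k : ℕ) (a b c : R)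
    (h1 : a * (b*a)^2 = a*b*a*c*a) (h2 : a*b*a*c*a = a*c*a*b*a)
    (h3 : a*c*a*b*a = (a*c)^2 * a) :
    (∃ d, IsDrazinInv ((a*c)^k) d) ↔ (∃ e, IsDrazinInv ((b*a)^k) e) := by
  obtain rfl | hk := eq_or_ne k 0
  · simp only [pow_zero]
  have hac : (a * c) ^ 3 = a * (b * a * b * a * c) := by
    calc (a * c) ^ 3 = (a * c) ^ 2 * a * c := by noncomm_ring
      _ = a * (b * a) ^ 2 * c := by rw [← h3, ← h2, ← h1]
      _ = a * (b * a * b * a * c) := by noncomm_ring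
  have hba : b * a * b * a * c * a = (b * a) ^ 3 := by
    calc b * a * b * a * c * a = b * (a * b * a * c * a) := by noncomm_ring
      _ = b * (a * (b * a) ^ 2) := by rw [h1]
      _ = (b * a) ^ 3 := by noncomm_ring
  change IsDrazinInvertible _ ↔ IsDrazinInvertible _
  rw [isDrazinInvertible_pow_iff hk, isDrazinInvertible_pow_iff hk,
    ← isDrazinInvertible_pow_iff (x := a * c) three_ne_zero, hac, isDrazinInvertible_mul_comm,
    hba, isDrazinInvertible_pow_iff three_ne_zero]

theorem stmt_7 {R : Type*} [Ring R] (k : ℕ) (hk : 1 ≤ k) (a b c : R)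
    (h1 : a * (b*a)^2 = a*b*a*c*a) (h2 : a*b*a*c*a = a*c*a*b*a)
    (h3 : a*c*a*b*a = (a*c)^2 * a) :
    (∃ d, IsDrazinInv ((a*c)^k) d) ↔ (∃ e, IsDrazinInv ((b*a)^k) e) :=
  stmt_7_general k a b c h1 h2 h3
end

section
/- Let R be a ring with identity and a, b, c ∈ R satisfy a(ba)² = abaca = acaba = (ac)²a. Then a(bab)a(bab)a = a(bab)a(cac)a = a(cac)a(bab)a = a(cac)a(cac)a, i.e. the triple (a, bab, cac) also satisfies the same hypothesis. -/
/-!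
Write `a⟨x₁, …, xₙ⟩` for `a x₁ a x₂ ⋯ a xₙ a`. The hypothesis says that `a⟨x, y⟩` takes one
value `a⟨b, b⟩` for all `x, y ∈ {b, c}`. Since `a⟨x, y, t⟩ = a⟨x, y⟩ * (t-part)`, the first two
letters of any longer word can be replaced by `b, b`; by induction on the tail, every word of
length `n ≥ 2` over `{b, c}` gives `a⟨b, …, b⟩`. The four products in the conclusion are the words
`a⟨b,b,b,b⟩`, `a⟨b,b,c,c⟩`, `a⟨c,c,b,b⟩`, `a⟨c,c,c,c⟩`.
-/

section Sandwich

variable {M : Type*} [Monoid M]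

def sandwichProd (a : M) (l : List M) : M :=
  a * (l.map (· * a)).prod

variable (a : M)

theorem sandwichProd_cons (x : M) (l : List M) :
    sandwichProd a (x :: l) = a * x * sandwichProd a l := by
  simp only [sandwichProd, List.map_cons, List.prod_cons, mul_assoc]

theorem sandwichProd_cons_cons (x y : M) (l : List M) :
    sandwichProd a (x :: y :: l) = a * x * a * y * a * (l.map (· * a)).prod := by
  simp only [sandwichProd, List.map_cons, List.prod_cons, mul_assoc]

theorem sandwichProd_eq_replicate {S : Set M} {s : M} (hs : s ∈ S)
    (hS : ∀ x ∈ S, ∀ y ∈ S, a * x * a * y * a = a * s * a * s * a) :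
    ∀ l : List M, (∀ x ∈ l, x ∈ S) → 2 ≤ l.length →
      sandwichProd a l = sandwichProd a (List.replicate l.length s)
  | [_], _, h | [], _, h => by simp at h
  | [x, y], hl, _ => by
    simp only [List.length_cons, List.length_nil, List.replicate_succ, List.replicate_zero,
      sandwichProd_cons_cons]
    rw [hS x (hl x (by simp)) y (hl y (by simp))]
  | x :: y :: z :: t, hl, _ => by
    have ih := sandwichProd_eq_replicate hs hS (y :: z :: t)
      (fun w hw => hl w (List.mem_cons_of_mem x hw)) (by simp)
    simp only [List.length_cons, List.replicate_succ] at ih ⊢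
    rw [sandwichProd_cons, ih, ← sandwichProd_cons, sandwichProd_cons_cons,
      sandwichProd_cons_cons, hS x (hl x (by simp)) s hs]

end Sandwich

theorem stmt_8 {R : Type*} [Ring R] (a b c : R)
    (h1 : a * (b*a)^2 = a*b*a*c*a) (h2 : a*b*a*c*a = a*c*a*b*a)
    (h3 : a*c*a*b*a = (a*c)^2 * a) :
    a*(b*a*b)*a*(b*a*b)*a = a*(b*a*b)*a*(c*a*c)*a ∧
    a*(b*a*b)*a*(c*a*c)*a = a*(c*a*c)*a*(b*a*b)*a ∧
    a*(c*a*c)*a*(b*a*b)*a = a*(c*a*c)*a*(c*a*c)*a := by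
  simp only [pow_two, ← mul_assoc] at h1 h3
  have hS : ∀ x ∈ ({b, c} : Set R), ∀ y ∈ ({b, c} : Set R), a*x*a*y*a = a*b*a*b*a := by
    rintro x (rfl | rfl) y (rfl | rfl) <;> simp only [h1, h2, h3]
  have hword (l : List R) (hl : ∀ x ∈ l, x ∈ ({b, c} : Set R)) (hlen : l.length = 4) :
      sandwichProd a l = sandwichProd a (List.replicate 4 b) :=
    hlen ▸ sandwichProd_eq_replicate a (by simp) hS l hl (by omega)
  have hbb := hword [b, b, b, b] (by simp) rfl
  have hbc := hword [b, b, c, c] (by simp) rfl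
  have hcb := hword [c, c, b, b] (by simp) rfl
  have hcc := hword [c, c, c, c] (by simp) rfl
  simp only [sandwichProd, List.map_cons, List.map_nil, List.prod_cons, List.prod_nil,
    mul_one, mul_assoc] at hbb hbc hcb hcc ⊢
  exact ⟨hbb.trans hbc.symm, hbc.trans hcb.symm, hcb.trans hcc.symm⟩
end

section
/- Let R be a ring with identity and a, b, c ∈ R satisfy a(ba)² = abaca = acaba = (ac)²a. If ba is a unit, then ac has a group inverse, i.e. there exists y with (ac)y = y(ac), y(ac)y = y, and (ac)y(ac) = ac. -/
/-!
Cancelling the unit `ba` on the right of `a(ba)² = acaba` gives `aca = aba`; multiplying by `b`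
on the left then gives `(ba)(ca) = (ba)²`, so `ca = ba` is a unit `u`. Whenever `ca = u` is a
unit, `a u⁻² c` is a group inverse of `ac`.
-/

section
variable {M : Type*} [Monoid M]

theorem exists_group_inverse_mul_of_isUnit_mul {a c : M} (h : IsUnit (c * a)) :
    ∃ y : M, (a * c) * y = y * (a * c) ∧ y * (a * c) * y = y ∧ (a * c) * y * (a * c) = a * c := by
  obtain ⟨u, hu⟩ := h
  have hca : ∀ x : M, c * (a * x) = u * x := fun x => by rw [← mul_assoc, hu]
  refine ⟨a * (↑u⁻¹ * (↑u⁻¹ * c)), ?_, ?_, ?_⟩ <;>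
    simp only [mul_assoc, hca, Units.mul_inv_cancel_left, Units.inv_mul_cancel_left]

theorem mul_eq_mul_of_mul_mul_eq {a b c : M} (hu : IsUnit (b * a))
    (h : a * c * a = a * b * a) : c * a = b * a :=
  hu.mul_left_cancel <| calc
    b * a * (c * a) = b * (a * c * a) := by simp only [mul_assoc]
    _ = b * a * (b * a) := by rw [h]; simp only [mul_assoc]

end

theorem stmt_11_general {R : Type*} [Ring R] (a b c : R)
    (h1 : a * (b*a)^2 = a*b*a*c*a) (h2 : a*b*a*c*a = a*c*a*b*a)
    (hu : IsUnit (b*a)) :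
    ∃ y : R, (a*c) * y = y * (a*c) ∧ y * (a*c) * y = y ∧ (a*c) * y * (a*c) = a*c := by
  have haca : a * c * a = a * b * a := by
    refine hu.mul_right_cancel ?_
    calc a * c * a * (b * a) = a * (b * a) ^ 2 := by rw [h1, h2]; simp only [mul_assoc]
      _ = a * b * a * (b * a) := by rw [sq]; simp only [mul_assoc]
  rw [← mul_eq_mul_of_mul_mul_eq hu haca] at hu
  exact exists_group_inverse_mul_of_isUnit_mul hu

theorem stmt_11 {R : Type*} [Ring R] (a b c : R)
    (h1 : a * (b*a)^2 = a*b*a*c*a) (h2 : a*b*a*c*a = a*c*a*b*a)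
    (h3 : a*c*a*b*a = (a*c)^2 * a)
    (hu : IsUnit (b*a)) :
    ∃ y : R, (a*c) * y = y * (a*c) ∧ y * (a*c) * y = y ∧ (a*c) * y * (a*c) = a*c :=
  stmt_11_general a b c h1 h2 hu
end

section
/- Let R be a ring with identity and a, b, c ∈ R satisfy a(ba)² = abaca = acaba = (ac)²a. Then for every n ≥ 2, a(ba)ⁿ = (ac)ⁿa. -/
theorem mul_mul_pow_eq_mul_pow_mul {M : Type*} [Monoid M] {a b c : M}
    (hsq : a * (b * a) ^ 2 = (a * c) ^ 2 * a) (hmix : a * c * a * b * a = (a * c) ^ 2 * a) :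
    ∀ n, 2 ≤ n → a * (b * a) ^ n = (a * c) ^ n * a := by
  intro n hn
  induction n, hn using Nat.le_induction with
  | base => exact hsq
  | succ n hn ih =>
    obtain ⟨m, rfl⟩ : ∃ m, n = m + 1 := ⟨n - 1, by omega⟩
    calc a * (b * a) ^ (m + 1 + 1)
        = (a * c) ^ m * (a * c * a * b * a) := by
          rw [pow_succ, ← mul_assoc, ih, pow_succ]; simp only [mul_assoc]
      _ = (a * c) ^ (m + 1 + 1) * a := by
          rw [hmix, ← mul_assoc, ← pow_add]

theorem stmt_12 {R : Type*} [Ring R] (a b c : R)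
    (h1 : a * (b*a)^2 = a*b*a*c*a) (h2 : a*b*a*c*a = a*c*a*b*a)
    (h3 : a*c*a*b*a = (a*c)^2 * a) :
    ∀ n, 2 ≤ n → a * (b*a)^n = (a*c)^n * a :=
  mul_mul_pow_eq_mul_pow_mul (h1.trans (h2.trans h3)) h3
end

section
/- Let A be a complex Banach algebra with identity 1 and a, b, c ∈ A satisfy a(ba)² = abaca = acaba = (ac)²a. Then for every nonzero λ ∈ ℂ, λ·1 - ac is invertible if and only if λ·1 - ba is invertible; consequently σ(ac) ∖ {0} = σ(ba) ∖ {0}. -/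
/-!
Put `x = b a` and `y = c a`. Multiplying the hypotheses on the left by `b` and by `c` gives the
cubic relations `x² y = x y² = x³` and `y² x = y x² = y³`. Under these, if `v` inverts `1 - x`
then `1 + y + y² + y x² v` inverts `1 - y`, and the relations are homogeneous, so they survive
rescaling `x, y` by `λ⁻¹`: hence `σ(b a) \ {0} = σ(c a) \ {0}`. Finally `σ(c a)` and `σ(a c)`
agree away from `0` by Jacobson's lemma.
-/

theorem isUnit_one_sub_of_isUnit_one_sub_of_cubic {R : Type*} [Ring R] {x y : R}
    (hxy : x ^ 2 * y = x ^ 3) (hyx : y ^ 2 * x = y ^ 3) (hyxx : y * x ^ 2 = y ^ 3)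
    (h : IsUnit (1 - x)) : IsUnit (1 - y) := by
  obtain ⟨u, hu⟩ := h
  set v : R := ↑u⁻¹
  have hv : (1 - x) * v = 1 := by rw [← hu]; exact u.mul_inv
  have hxv : Commute x v :=
    Commute.units_inv_right (hu ▸ (Commute.one_right x).sub_right (Commute.refl x))
  have hyyxx : y ^ 2 * x ^ 2 = y * x ^ 3 :=
    calc y ^ 2 * x ^ 2 = y * (y * x ^ 2) := by noncomm_ring
      _ = y * (y ^ 2 * x) := by rw [hyxx, hyx]
      _ = y ^ 3 * x := by noncomm_ring
      _ = y * x ^ 3 := by rw [← hyxx]; noncomm_ring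
  have hxxvy : x ^ 2 * v * y = x ^ 3 * v :=
    calc x ^ 2 * v * y = v * (x ^ 2 * y) := by rw [(hxv.pow_left 2).eq, mul_assoc]
      _ = x ^ 3 * v := by rw [hxy, (hxv.pow_left 3).eq]
  have hw : 1 - y ^ 3 + y * x ^ 2 * ((1 - x) * v) = 1 := by rw [hv, mul_one, hyxx, sub_add_cancel]
  refine (Units.mk (1 - y) (1 + y + y ^ 2 + y * x ^ 2 * v) ?_ ?_).isUnit
  · calc (1 - y) * (1 + y + y ^ 2 + y * x ^ 2 * v)
          = 1 - y ^ 3 + y * x ^ 2 * v - y ^ 2 * x ^ 2 * v := by noncomm_ring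
      _ = 1 - y ^ 3 + y * x ^ 2 * ((1 - x) * v) := by rw [hyyxx]; noncomm_ring
      _ = 1 := hw
  · calc (1 + y + y ^ 2 + y * x ^ 2 * v) * (1 - y)
          = 1 - y ^ 3 + y * x ^ 2 * v - y * (x ^ 2 * v * y) := by noncomm_ring
      _ = 1 - y ^ 3 + y * x ^ 2 * ((1 - x) * v) := by rw [hxxvy]; noncomm_ring
      _ = 1 := hw

theorem isUnit_one_sub_iff_of_cubic {R : Type*} [Ring R] {x y : R}
    (hxy : x ^ 2 * y = x ^ 3) (hxyy : x * y ^ 2 = x ^ 3)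
    (hyx : y ^ 2 * x = y ^ 3) (hyxx : y * x ^ 2 = y ^ 3) :
    IsUnit (1 - x) ↔ IsUnit (1 - y) :=
  ⟨isUnit_one_sub_of_isUnit_one_sub_of_cubic hxy hyx hyxx,
    isUnit_one_sub_of_isUnit_one_sub_of_cubic hyx hxy hxyy⟩

theorem smul_sq_mul_smul_eq_pow_three {k A : Type*} [Field k] [Ring A] [Algebra k A]
    (t : k) {x y : A} (h : x ^ 2 * y = x ^ 3) : (t • x) ^ 2 * (t • y) = (t • x) ^ 3 := by
  rw [smul_pow, smul_pow, smul_mul_smul_comm, ← pow_succ, h]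

theorem smul_mul_smul_sq_eq_pow_three {k A : Type*} [Field k] [Ring A] [Algebra k A]
    (t : k) {x y : A} (h : x * y ^ 2 = x ^ 3) : (t • x) * (t • y) ^ 2 = (t • x) ^ 3 := by
  rw [smul_pow, smul_pow, smul_mul_smul_comm, ← pow_succ', h]

theorem spectrum.mem_iff_not_isUnit_one_sub_inv_smul {k A : Type*} [Field k] [Ring A]
    [Algebra k A] {r : k} (hr : r ≠ 0) (z : A) :
    r ∈ spectrum k z ↔ ¬IsUnit (1 - r⁻¹ • z) := by
  have : r • (1 : A) - z = Units.mk0 r hr • (1 - r⁻¹ • z) := by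
    rw [Units.smul_mk0, smul_sub, smul_inv_smul₀ hr]
  rw [spectrum.mem_iff, Algebra.algebraMap_eq_smul_one, this, isUnit_smul_iff]

theorem spectrum_diff_zero_eq_of_cubic {k A : Type*} [Field k] [Ring A] [Algebra k A]
    {x y : A} (hxy : x ^ 2 * y = x ^ 3) (hxyy : x * y ^ 2 = x ^ 3)
    (hyx : y ^ 2 * x = y ^ 3) (hyxx : y * x ^ 2 = y ^ 3) :
    spectrum k x \ {0} = spectrum k y \ {0} := by
  ext r
  simp only [Set.mem_sdiff, Set.mem_singleton_iff]
  refine and_congr_left fun hr => ?_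
  rw [spectrum.mem_iff_not_isUnit_one_sub_inv_smul hr,
    spectrum.mem_iff_not_isUnit_one_sub_inv_smul hr]
  exact not_congr <| isUnit_one_sub_iff_of_cubic
    (smul_sq_mul_smul_eq_pow_three _ hxy) (smul_mul_smul_sq_eq_pow_three _ hxyy)
    (smul_sq_mul_smul_eq_pow_three _ hyx) (smul_mul_smul_sq_eq_pow_three _ hyxx)

theorem spectrum_mul_diff_zero_eq_of_quintic {k A : Type*} [Field k] [Ring A] [Algebra k A]
    {a b c : A} (h1 : a * (b * a) ^ 2 = a * b * a * c * a)
    (h2 : a * b * a * c * a = a * c * a * b * a)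
    (h3 : a * c * a * b * a = (a * c) ^ 2 * a) :
    spectrum k (b * a) \ {0} = spectrum k (c * a) \ {0} := by
  simp only [pow_succ, pow_zero, one_mul, mul_assoc] at h1 h2 h3
  apply spectrum_diff_zero_eq_of_cubic <;>
    simp only [pow_succ, pow_zero, one_mul, mul_assoc, h1, h2, h3]

theorem stmt_14_general {A : Type*} [NormedRing A] [NormedAlgebra ℂ A]
    (a b c : A)
    (h1 : a * (b*a)^2 = a*b*a*c*a) (h2 : a*b*a*c*a = a*c*a*b*a)
    (h3 : a*c*a*b*a = (a*c)^2 * a) :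
    (∀ l : ℂ, l ≠ 0 → (IsUnit (algebraMap ℂ A l - a*c) ↔ IsUnit (algebraMap ℂ A l - b*a))) ∧
    spectrum ℂ (a*c) \ {0} = spectrum ℂ (b*a) \ {0} := by
  have hσ : spectrum ℂ (a*c) \ {0} = spectrum ℂ (b*a) \ {0} := by
    rw [spectrum.nonzero_mul_comm, spectrum_mul_diff_zero_eq_of_quintic h1 h2 h3]
  refine ⟨fun l hl => ?_, hσ⟩
  simpa only [Set.mem_sdiff, Set.mem_singleton_iff, hl, not_false_eq_true, and_true,
    spectrum.mem_iff, not_iff_not] using Set.ext_iff.mp hσ l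

theorem stmt_14 {A : Type*} [NormedRing A] [NormedAlgebra ℂ A] [CompleteSpace A]
    (a b c : A)
    (h1 : a * (b*a)^2 = a*b*a*c*a) (h2 : a*b*a*c*a = a*c*a*b*a)
    (h3 : a*c*a*b*a = (a*c)^2 * a) :
    (∀ l : ℂ, l ≠ 0 → (IsUnit (algebraMap ℂ A l - a*c) ↔ IsUnit (algebraMap ℂ A l - b*a))) ∧
    spectrum ℂ (a*c) \ {0} = spectrum ℂ (b*a) \ {0} :=
  stmt_14_general a b c h1 h2 h3
end

section
/- Let R be a ring with identity and a, b, c ∈ R satisfy a(ba)² = abaca = acaba = (ac)²a. Suppose d ∈ R commutes with ac and d(ac)d = d. Then e = bd²a satisfies e(ba)e = e. -/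
/-!
Write `x = a * c`. The hypotheses say `d` commutes with `x` and `d x d = d`, so `x d² = d`
and hence `d² = x d³`. Since `(ab)² a = x² a`, this gives `d² (ab)² d² = d² x³ d³ = d²`,
and `e (ba) e = b (d² (ab)² d²) a = b d² a = e`.
-/

namespace Commute

variable {M : Type*} [Monoid M] {d x : M}

theorem mul_sq_eq_of_mul_mul_self (hc : Commute d x) (hd : d * x * d = d) : x * d ^ 2 = d := by
  rw [sq, ← mul_assoc, ← hc.eq, hd]

theorem sq_mul_pow_three_mul_pow_three (hc : Commute d x) (hd : d * x * d = d) :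
    d ^ 2 * x ^ 3 * d ^ 3 = d ^ 2 := by
  have hxd := hc.mul_sq_eq_of_mul_mul_self hd
  calc d ^ 2 * x ^ 3 * d ^ 3 = d * (d * x * (x * (x * d ^ 2)) * d) := by
        simp only [pow_succ, pow_zero, one_mul, mul_assoc]
    _ = d * (d * x * (x * d) * d) := by rw [hxd]
    _ = d * (d * x * (x * d ^ 2)) := by simp only [sq, mul_assoc]
    _ = d ^ 2 := by rw [hxd, hd, sq]

end Commute

theorem mul_mul_mul_eq_of_sq_mul_eq {M : Type*} [Monoid M] {a b c d : M}
    (habc : (a * b) ^ 2 * a = (a * c) ^ 2 * a) (hc : Commute d (a * c))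
    (hd : d * (a * c) * d = d) :
    (b * d ^ 2 * a) * (b * a) * (b * d ^ 2 * a) = b * d ^ 2 * a := by
  have hd2 : d ^ 2 = a * c * d ^ 3 := by
    rw [pow_succ d 2, ← mul_assoc, hc.mul_sq_eq_of_mul_mul_self hd, sq]
  have hkey : d ^ 2 * (a * b) ^ 2 * d ^ 2 = d ^ 2 := by
    calc d ^ 2 * (a * b) ^ 2 * d ^ 2 = d ^ 2 * ((a * b) ^ 2 * a) * c * d ^ 3 := by
          rw [hd2]; simp only [mul_assoc]
      _ = d ^ 2 * (a * c) ^ 3 * d ^ 3 := by rw [habc]; simp only [pow_succ, mul_assoc]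
      _ = d ^ 2 := hc.sq_mul_pow_three_mul_pow_three hd
  calc (b * d ^ 2 * a) * (b * a) * (b * d ^ 2 * a)
      = b * (d ^ 2 * (a * b) ^ 2 * d ^ 2) * a := by simp only [sq, mul_assoc]
    _ = b * d ^ 2 * a := by rw [hkey, mul_assoc]

theorem stmt_17 {R : Type*} [Ring R] (a b c d : R)
    (h1 : a * (b*a)^2 = a*b*a*c*a) (h2 : a*b*a*c*a = a*c*a*b*a)
    (h3 : a*c*a*b*a = (a*c)^2 * a)
    (hd1 : d * (a*c) = (a*c) * d) (hd2 : d * (a*c) * d = d) :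
    (b*d^2*a) * (b*a) * (b*d^2*a) = b*d^2*a := by
  have habc : (a * b) ^ 2 * a = (a * c) ^ 2 * a := by
    rw [← h3, ← h2, ← h1]; simp only [sq, mul_assoc]
  exact mul_mul_mul_eq_of_sq_mul_eq habc hd1 hd2
end
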